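/- arXiv:2007.01121 — 3 statements merged into one kernel-verified Lean document; each statement's English description precedes it below -/
import Mathlib

section
/- Let M₀, …, Mₙ be Hermitian d×d complex matrices, set M(x) = M₀x₀ + ⋯ + Mₙxₙ, and suppose e ∈ ℝⁿ⁺¹ is such that M(e) is positive definite. Then the connected component of e in the set {x ∈ ℝⁿ⁺¹ : det M(x) ≠ 0} is exactly {x ∈ ℝⁿ⁺¹ : M(x) is positive definite}; in particular, the hyperbolicity cone of f = det(M(x)) with respect to e is a spectrahedron. -/
open scoped ComplexOrder
open Matrix Topology Filter

/-!
The set `P` of `x` with `M(x)` positive definite is convex, contains `e` and lies in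
`S = {x | det M(x) ≠ 0}`; it is open by compactness of the unit sphere. A positive semidefinite
matrix with nonzero determinant is definite, so `S` is covered by `P` and the open complement of
the closed set where `M(x)` is semidefinite. Hence `P` is relatively clopen in `S`, and it is the
component of `e`. Its closure is the semidefinite locus of `M`, because `x + t e ∈ P` whenever
`M(x)` is semidefinite and `t > 0`. Finally, a Hermitian `A = B + iC` is semidefinite iff the
real symmetric matrix `[[B, -C], [C, B]]` is, which turns that locus into a spectrahedron.
-/

namespace Matrix

variable {ι : Type*}

section PosDef

variable {𝕜 : Type*} [RCLike 𝕜]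

theorem convex_setOf_posDef : Convex ℝ {A : Matrix ι ι 𝕜 | A.PosDef} :=
  convex_iff_forall_pos.mpr fun _ hA _ hB _ _ ha hb _ => (hA.smul ha).add (hB.smul hb)

variable [Fintype ι]

theorem isClosed_setOf_posSemidef : IsClosed {A : Matrix ι ι 𝕜 | A.PosSemidef} := by
  have hset : {A : Matrix ι ι 𝕜 | A.PosSemidef} =
      {A | Aᴴ = A} ∩ ⋂ x : ι → 𝕜, {A | 0 ≤ star x ⬝ᵥ A *ᵥ x} := by
    ext A
    simp [posSemidef_iff_dotProduct_mulVec, IsHermitian]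
  rw [hset]
  refine (isClosed_eq continuous_id.matrix_conjTranspose continuous_id).inter
    (isClosed_iInter fun x => isClosed_le continuous_const ?_)
  exact continuous_const.dotProduct (continuous_id.matrix_mulVec continuous_const)

theorem PosDef.of_re_pos_of_norm_eq_one {A : Matrix ι ι 𝕜} (hA : A.IsHermitian)
    (h : ∀ v : ι → 𝕜, ‖v‖ = 1 → 0 < RCLike.re (star v ⬝ᵥ A *ᵥ v)) : A.PosDef := by
  refine PosDef.of_dotProduct_mulVec_pos hA fun v hv => ?_
  have hv' : 0 < ‖v‖ := norm_pos_iff.mpr hv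
  set c : 𝕜 := ((‖v‖⁻¹ : ℝ) : 𝕜)
  have hcv : ‖c • v‖ = 1 := by
    rw [norm_smul, RCLike.norm_ofReal, abs_inv, abs_norm, inv_mul_cancel₀ hv'.ne']
  have hscale : star (c • v) ⬝ᵥ A *ᵥ (c • v) = c * c * (star v ⬝ᵥ A *ᵥ v) := by
    rw [star_smul, mulVec_smul, smul_dotProduct, dotProduct_smul, smul_eq_mul, smul_eq_mul,
      RCLike.star_def, RCLike.conj_ofReal, mul_assoc]
  have hre := h _ hcv
  rw [hscale, ← RCLike.ofReal_mul, RCLike.re_ofReal_mul] at hre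
  exact RCLike.pos_iff.mpr ⟨pos_of_mul_pos_right hre (mul_self_nonneg _),
    hA.im_star_dotProduct_mulVec_self v⟩

theorem isOpen_setOf_posDef {X : Type*} [TopologicalSpace X] {f : X → Matrix ι ι 𝕜}
    (hf : Continuous f) (hH : ∀ x, (f x).IsHermitian) : IsOpen {x | (f x).PosDef} := by
  refine isOpen_iff_mem_nhds.mpr fun x₀ hx₀ => ?_
  have hq : Continuous fun p : X × (ι → 𝕜) => RCLike.re (star p.2 ⬝ᵥ f p.1 *ᵥ p.2) := by
    fun_prop
  have hsphere : ∀ v ∈ Metric.sphere (0 : ι → 𝕜) 1, ∀ᶠ p : X × (ι → 𝕜) in 𝓝 (x₀, v),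
      0 < RCLike.re (star p.2 ⬝ᵥ f p.1 *ᵥ p.2) := fun v hv =>
    continuousAt_const.eventually_lt hq.continuousAt
      (hx₀.re_dotProduct_pos (ne_zero_of_mem_unit_sphere ⟨v, hv⟩))
  filter_upwards [(isCompact_sphere (0 : ι → 𝕜) 1).eventually_forall_of_forall_eventually
      (P := fun x v => 0 < RCLike.re (star v ⬝ᵥ f x *ᵥ v)) hsphere] with x hx
  exact PosDef.of_re_pos_of_norm_eq_one (hH x) fun v hv => hx v (by simpa using hv)

theorem connectedComponentIn_setOf_det_ne_zero_subset [DecidableEq ι] {X : Type*}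
    [TopologicalSpace X] {f : X → Matrix ι ι 𝕜} (hf : Continuous f) (hH : ∀ x, (f x).IsHermitian) {e : X}
    (he : (f e).PosDef) :
    connectedComponentIn {x | (f x).det ≠ 0} e ⊆ {x | (f x).PosDef} := by
  refine isPreconnected_connectedComponentIn.subset_left_of_subset_union
    (isOpen_setOf_posDef hf hH) (isClosed_setOf_posSemidef.preimage hf).isOpen_compl
    (Set.disjoint_left.mpr fun x hx hx' => hx' hx.posSemidef) (fun x hx => ?_)
    ⟨e, mem_connectedComponentIn he.det_pos.ne', he⟩
  by_cases hpsd : (f x).PosSemidef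
  · exact .inl (hpsd.posDef_iff_det_ne_zero.mpr (connectedComponentIn_subset _ _ hx))
  · exact .inr hpsd

section LinearPencil

variable {E : Type*} [AddCommGroup E] [Module ℝ E] [TopologicalSpace E] [ContinuousAdd E]
  [ContinuousSMul ℝ E] {L : E →ₗ[ℝ] Matrix ι ι 𝕜} {e : E}

theorem closure_setOf_posDef (hL : Continuous L) (he : (L e).PosDef) :
    closure {x | (L x).PosDef} = {x | (L x).PosSemidef} := by
  refine (closure_minimal (fun x hx => PosDef.posSemidef hx)
    (isClosed_setOf_posSemidef.preimage hL)).antisymm fun x (hx : (L x).PosSemidef) => ?_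
  have hray : Tendsto (fun t : ℝ => x + t • e) (𝓝[>] 0) (𝓝 x) := by
    have hc : Continuous fun t : ℝ => x + t • e := by fun_prop
    simpa using (hc.tendsto 0).mono_left nhdsWithin_le_nhds
  refine mem_closure_of_tendsto hray (eventually_nhdsWithin_of_forall fun t ht => ?_)
  show (L (x + t • e)).PosDef
  rw [map_add, map_smul]
  exact PosDef.posSemidef_add hx (he.smul ht)

theorem connectedComponentIn_setOf_det_ne_zero_eq [DecidableEq ι] (hL : Continuous L)
    (hH : ∀ x, (L x).IsHermitian) (he : (L e).PosDef) :
    connectedComponentIn {x | (L x).det ≠ 0} e = {x | (L x).PosDef} :=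
  (connectedComponentIn_setOf_det_ne_zero_subset hL hH he).antisymm <|
    ((convex_setOf_posDef (ι := ι) (𝕜 := 𝕜)).linear_preimage L).isPreconnected
      |>.subset_connectedComponentIn he fun _ hx => hx.det_pos.ne'

end LinearPencil

end PosDef

section Realify

def realify : Matrix ι ι ℂ →ₗ[ℝ] Matrix (ι ⊕ ι) (ι ⊕ ι) ℝ where
  toFun A := fromBlocks (A.map (·.re)) (-A.map (·.im)) (A.map (·.im)) (A.map (·.re))
  map_add' A B := by ext (i | i) (j | j) <;> simp [add_comm]
  map_smul' r A := by ext (i | i) (j | j) <;> simp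

theorem IsHermitian.isSymm_realify {A : Matrix ι ι ℂ} (hA : A.IsHermitian) :
    (realify A).IsSymm := by
  have hre i j : (A j i).re = (A i j).re := by rw [← hA.apply i j]; simp
  have him i j : (A j i).im = -(A i j).im := by rw [← hA.apply i j]; simp
  ext (i | i) (j | j) <;> simp [realify, hre i j, him i j]

variable [Fintype ι]

theorem sumElim_dotProduct_realify_mulVec (A : Matrix ι ι ℂ) (a b : ι → ℝ) :
    Sum.elim a b ⬝ᵥ realify A *ᵥ Sum.elim a b =
      (star (fun i => (⟨a i, b i⟩ : ℂ)) ⬝ᵥ A *ᵥ fun i => (⟨a i, b i⟩ : ℂ)).re := by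
  simp only [dotProduct, mulVec, Fintype.sum_sum_type, Sum.elim_inl, Sum.elim_inr, mul_add,
    Finset.mul_sum, ← Finset.sum_add_distrib, Complex.re_sum]
  refine Finset.sum_congr rfl fun i _ => Finset.sum_congr rfl fun j _ => ?_
  simp [realify, Complex.mul_re]
  ring

theorem IsHermitian.posSemidef_realify_iff {A : Matrix ι ι ℂ} (hA : A.IsHermitian) :
    (realify A).PosSemidef ↔ A.PosSemidef := by
  simp only [posSemidef_iff_dotProduct_mulVec, star_trivial, isHermitian_iff_isSymm,
    hA.isSymm_realify, hA, true_and]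
  constructor
  · intro h v
    have hv := h (Sum.elim (fun i => (v i).re) fun i => (v i).im)
    rw [sumElim_dotProduct_realify_mulVec] at hv
    exact RCLike.nonneg_iff.mpr ⟨by simpa using hv, hA.im_star_dotProduct_mulVec_self v⟩
  · intro h w
    rw [← Sum.elim_comp_inl_inr w, sumElim_dotProduct_realify_mulVec]
    exact (RCLike.nonneg_iff.mp (h _)).1

end Realify

variable {κ : Type*} [Fintype κ]

def pencil (M : κ → Matrix ι ι ℂ) : (κ → ℝ) →ₗ[ℝ] Matrix ι ι ℂ where
  toFun x := ∑ k, (x k : ℂ) • M k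
  map_add' x y := by simp [add_smul, Finset.sum_add_distrib]
  map_smul' r x := by simp [Finset.smul_sum, mul_smul, Complex.coe_smul]

theorem isHermitian_pencil {M : κ → Matrix ι ι ℂ} (hM : ∀ k, (M k).IsHermitian) (x : κ → ℝ) :
    (pencil M x).IsHermitian :=
  isSelfAdjoint_sum _ fun k _ => by
    rw [Complex.coe_smul]
    exact (hM k).smul (IsSelfAdjoint.all (x k))

theorem realify_pencil (M : κ → Matrix ι ι ℂ) (x : κ → ℝ) :
    realify (pencil M x) = ∑ k, x k • realify (M k) := by
  simp [pencil, Complex.coe_smul]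

end Matrix

/-- If `M(x) = M₀x₀ + ⋯ + Mₙxₙ` is a Hermitian pencil and `M(e)` is positive
definite, then the connected component of `e` in `{x ∈ ℝⁿ⁺¹ : det M(x) ≠ 0}` is
exactly `{x : M(x) positive definite}`; in particular the hyperbolicity cone of
`f = det M(x)` with respect to `e` is a spectrahedron (its closure is the
positive-semidefinite set of a real symmetric linear pencil). -/
theorem hyperbolicity_cone_spectrahedron
    (n d : ℕ) (M : Fin (n + 1) → Matrix (Fin d) (Fin d) ℂ)
    (hM : ∀ k, (M k).IsHermitian) (e : Fin (n + 1) → ℝ)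
    (he : (∑ k, (e k : ℂ) • M k).PosDef) :
    connectedComponentIn {x : Fin (n + 1) → ℝ | (∑ k, (x k : ℂ) • M k).det ≠ 0} e =
      {x : Fin (n + 1) → ℝ | (∑ k, (x k : ℂ) • M k).PosDef} ∧
    ∃ (m : ℕ) (N : Fin (n + 1) → Matrix (Fin m) (Fin m) ℝ), (∀ k, (N k).IsSymm) ∧
      closure (connectedComponentIn
          {x : Fin (n + 1) → ℝ | (∑ k, (x k : ℂ) • M k).det ≠ 0} e) =
        {x : Fin (n + 1) → ℝ | (∑ k, x k • N k).PosSemidef} := by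
  have hL : Continuous (pencil M) := LinearMap.continuous_of_finiteDimensional _
  have hcomp : connectedComponentIn {x : Fin (n + 1) → ℝ | (∑ k, (x k : ℂ) • M k).det ≠ 0} e =
      {x | (∑ k, (x k : ℂ) • M k).PosDef} :=
    connectedComponentIn_setOf_det_ne_zero_eq (L := pencil M) hL (isHermitian_pencil hM) he
  have hclosure : closure {x : Fin (n + 1) → ℝ | (∑ k, (x k : ℂ) • M k).PosDef} =
      {x | (pencil M x).PosSemidef} :=
    closure_setOf_posDef (L := pencil M) hL he
  let σ : Fin d ⊕ Fin d ≃ Fin (d + d) := finSumFinEquiv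
  let R := reindexLinearEquiv ℝ ℝ σ σ
  refine ⟨hcomp, d + d, fun k => R (realify (M k)),
    fun k => (hM k).isSymm_realify.submatrix _, ?_⟩
  rw [hcomp, hclosure]
  ext x
  have hsum : ∑ k, x k • R (realify (M k)) = R (realify (pencil M x)) := by
    simp only [realify_pencil, map_sum, map_smul]
  show (pencil M x).PosSemidef ↔ (∑ k, x k • R (realify (M k))).PosSemidef
  rw [hsum, coe_reindexLinearEquiv, reindex_apply, posSemidef_submatrix_equiv,
    (isHermitian_pencil hM x).posSemidef_realify_iff]
end

section
/- Define, for each 4×4 complex matrix parameter with entries x_{jk} (0 ≤ j ≤ k ≤ 3) and y_{jk} (0 ≤ j < k ≤ 3), the symmetric 8×8 matrix A₈ = [[X, −Y], [Y, X]], where X = (x_{jk}) is symmetric and Y = (y_{jk}) is antisymmetric. A vector y = (y₀, …, y₇) ∈ ℂ⁸ satisfies y·A₈·yᵀ = 0 for all choices of the parameters x_{jk}, y_{jk} if and only if y lies in one of the two disjoint 3-dimensional projective subspaces H_Bl = V(y₀+iy₄, y₁+iy₅, y₂+iy₆, y₃+iy₇) or its conjugate V(y₀−iy₄, y₁−iy₅,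 y₂−iy₆, y₃−iy₇) of ℂP⁷. That is, the base locus of the family W of quadrics {V(y·A₈(x)·yᵀ) : x ∈ ℂP¹⁵} is the union of these two disjoint complex conjugate 3-spaces. -/
open Matrix

lemma key_form (X Y : Matrix (Fin 4) (Fin 4) ℂ) (y : Fin 4 ⊕ Fin 4 → ℂ) :
    y ⬝ᵥ (Matrix.fromBlocks X (-Y) Y X).mulVec y =
    ∑ j : Fin 4, ∑ k : Fin 4,
      (X j k * (y (Sum.inl j) * y (Sum.inl k) + y (Sum.inr j) * y (Sum.inr k)) +
       Y j k * (y (Sum.inr j) * y (Sum.inl k) - y (Sum.inl j) * y (Sum.inr k))) := by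
  simp [dotProduct, mulVec, fromBlocks, Fintype.sum_sum_type, Finset.mul_sum, Fin.sum_univ_four]
  ring

lemma sum_single (a b : Fin 4) (f : Fin 4 → Fin 4 → ℂ) :
    (∑ j : Fin 4, ∑ k : Fin 4, (if j = a ∧ k = b then (1:ℂ) else 0) * f j k) = f a b := by
  simp [ite_and, ← Finset.sum_filter]

/-- A point `y ∈ ℂ⁸ = ℂ⁴ ⊕ ℂ⁴` lies in the base locus of the family `W` of
quadrics `y ↦ y·[[X, -Y], [Y, X]]·yᵀ` (over all symmetric `X` and antisymmetric
`Y`) if and only if it lies in one of the two 3-spaces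
`V(y₀+iy₄, …, y₃+iy₇)` or `V(y₀-iy₄, …, y₃-iy₇)`; moreover these two
3-spaces are disjoint. -/
theorem base_locus_of_assoc_quadrics :
    (∀ y : Fin 4 ⊕ Fin 4 → ℂ,
      (∀ X Y : Matrix (Fin 4) (Fin 4) ℂ, X.IsSymm → Y.transpose = -Y →
        y ⬝ᵥ (Matrix.fromBlocks X (-Y) Y X).mulVec y = 0) ↔
      ((∀ j : Fin 4, y (Sum.inl j) + Complex.I * y (Sum.inr j) = 0) ∨
       (∀ j : Fin 4, y (Sum.inl j) - Complex.I * y (Sum.inr j) = 0))) ∧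
    (∀ y : Fin 4 ⊕ Fin 4 → ℂ,
      (∀ j : Fin 4, y (Sum.inl j) + Complex.I * y (Sum.inr j) = 0) →
      (∀ j : Fin 4, y (Sum.inl j) - Complex.I * y (Sum.inr j) = 0) → y = 0) := by
  have hI : Complex.I * Complex.I = -1 := Complex.I_mul_I
  constructor
  · intro y
    set u : Fin 4 → ℂ := fun j => y (Sum.inl j) with hu
    set v : Fin 4 → ℂ := fun j => y (Sum.inr j) with hv
    constructor
    · intro H
      -- derive that (u a + i v a) * (u b - i v b) = 0 for all a b
      have hst : ∀ a b : Fin 4, (u a + Complex.I * v a) * (u b - Complex.I * v b) = 0 := by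
        intro a b
        -- symmetric part
        have hf : u a * u b + v a * v b = 0 := by
          have hXsymm : (Matrix.of fun p q : Fin 4 =>
              (if p = a ∧ q = b then (1:ℂ) else 0) +
              (if p = b ∧ q = a then (1:ℂ) else 0)).IsSymm := by
            ext p q
            simp only [Matrix.transpose_apply, Matrix.of_apply]
            rw [add_comm]
            congr 1 <;> exact if_congr and_comm rfl rfl
          have h0 := H _ 0 hXsymm (by simp)
          rw [key_form] at h0
          simp only [Matrix.of_apply, Matrix.zero_apply, zero_mul, add_zero, add_mul] at h0
          simp only [Finset.sum_add_distrib] at h0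
          rw [sum_single a b (fun j k => u j * u k + v j * v k),
            sum_single b a (fun j k => u j * u k + v j * v k)] at h0
          linear_combination h0 / 2
        -- antisymmetric part
        have hg : v a * u b - u a * v b = 0 := by
          have hYanti : (Matrix.of fun p q : Fin 4 =>
              (if p = a ∧ q = b then (1:ℂ) else 0) -
              (if p = b ∧ q = a then (1:ℂ) else 0)).transpose =
              -(Matrix.of fun p q : Fin 4 =>
              (if p = a ∧ q = b then (1:ℂ) else 0) -
              (if p = b ∧ q = a then (1:ℂ) else 0)) := by
            ext p q
            simp only [Matrix.transpose_apply, Matrix.of_apply, Matrix.neg_apply, neg_sub]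
            congr 1 <;> exact if_congr and_comm rfl rfl
          have h0 := H 0 _ (by simp [Matrix.IsSymm]) hYanti
          rw [key_form] at h0
          simp only [Matrix.of_apply, Matrix.zero_apply, zero_mul, zero_add, sub_mul] at h0
          simp only [Finset.sum_sub_distrib] at h0
          rw [sum_single a b (fun j k => v j * u k - u j * v k),
            sum_single b a (fun j k => v j * u k - u j * v k)] at h0
          linear_combination h0 / 2
        linear_combination hf + Complex.I * hg - (v a * v b) * hI
      by_cases hall : ∀ a : Fin 4, u a + Complex.I * v a = 0
      · exact Or.inl hall
      · push_neg at hall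
        obtain ⟨a, ha⟩ := hall
        refine Or.inr fun b => ?_
        rcases mul_eq_zero.mp (hst a b) with h | h
        · exact absurd h ha
        · exact h
    · intro H X Y hX hY
      rw [key_form]
      refine Finset.sum_eq_zero fun j _ => Finset.sum_eq_zero fun k _ => ?_
      rcases H with h | h
      · have hj : y (Sum.inl j) = -(Complex.I * y (Sum.inr j)) := by linear_combination h j
        have hk : y (Sum.inl k) = -(Complex.I * y (Sum.inr k)) := by linear_combination h k
        rw [hj, hk]
        linear_combination (X j k * y (Sum.inr j) * y (Sum.inr k)) * hI
      · have hj : y (Sum.inl j) = Complex.I * y (Sum.inr j) := by linear_combination h j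
        have hk : y (Sum.inl k) = Complex.I * y (Sum.inr k) := by linear_combination h k
        rw [hj, hk]
        linear_combination (X j k * y (Sum.inr j) * y (Sum.inr k)) * hI
  · intro y h1 h2
    funext x
    cases x with
    | inl j =>
        show y (Sum.inl j) = 0
        linear_combination (h1 j + h2 j) / 2
    | inr j =>
        show y (Sum.inr j) = 0
        linear_combination (-Complex.I / 2) * h1 j + (Complex.I / 2) * h2 j
          + y (Sum.inr j) * hI
end

section
/- The ℂ-linear map sending a 4×4 complex matrix M = X + iY (X symmetric, Y antisymmetric) to the quadratic form q(y) = y·A₈·yᵀ on ℂ⁸, where A₈ = [[X, −Y],[Y, X]], is injective, its image is exactly the space of quadratic forms on ℂ⁸ that vanish identically on both 3-dimensional subspaces span corresponding to H_Bl = V(y₀+iy₄, y₁+iy₅, y₂+iy₆, y₃+iy₇) and its conjugate V(y₀−iy₄, …, y₃−iy₇), and rank(A₈) = 2·rank(M). Consequently, there is an isomorphism between the rank-k locus of P(M₄(ℂ)) ≅ ℂP¹⁵ and the space of rank-2k quadrics in ℂP⁷ passing through two given disjoint 3-spaces. -/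
/-!
Over a field of characteristic `≠ 2` a symmetric matrix is determined by its quadratic form, and
`M = X + iY` is read off the blocks of `A₈(M)`; this gives injectivity. The two 3-spaces are the
graphs `y₁ = ∓ i y₂`, and on a vector `(c v, v)` the form of `S = [[S₁₁, S₁₂], [S₂₁, S₂₂]]` is
`v ↦ vᵀ (c² S₁₁ + c (S₁₂ + S₂₁) + S₂₂) v`. So a symmetric `S` vanishes on both graphs iff
`S₂₂ = S₁₁` and `S₂₁ = -S₁₂`, which is exactly the block shape of `A₈(S₁₁ - i S₁₂)`. For the
rank, the coordinates `(y₁ + i y₂, y₁ - i y₂)` conjugate `A₈(M)` to `diag(M, Mᵀ)`.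
-/

open Matrix

/-- The symmetric part `X` and antisymmetric part `Y` of `M = X + iY`, assembled
into the associated symmetric 8×8 matrix `A₈ = [[X, -Y], [Y, X]]`. -/
noncomputable def assocA8 (M : Matrix (Fin 4) (Fin 4) ℂ) :
    Matrix (Fin 4 ⊕ Fin 4) (Fin 4 ⊕ Fin 4) ℂ :=
  Matrix.fromBlocks ((1 / 2 : ℂ) • (M + M.transpose))
    (-((-Complex.I / 2) • (M - M.transpose)))
    ((-Complex.I / 2) • (M - M.transpose))
    ((1 / 2 : ℂ) • (M + M.transpose))

theorem Submodule.finrank_prod {K V W : Type*} [Field K] [AddCommGroup V] [Module K V]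
    [AddCommGroup W] [Module K W] [FiniteDimensional K V] [FiniteDimensional K W]
    (p : Submodule K V) (q : Submodule K W) :
    Module.finrank K (p.prod q) = Module.finrank K p + Module.finrank K q :=
  ((show p.prod q ≃ₗ[K] p × q from
    { toFun x := (⟨x.1.1, x.2.1⟩, ⟨x.1.2, x.2.2⟩)
      invFun y := ⟨(y.1, y.2), y.1.2, y.2.2⟩
      map_add' _ _ := rfl
      map_smul' _ _ := rfl }).finrank_eq).trans Module.finrank_prod

namespace Matrix

variable {R : Type*} [CommRing R] {n : Type*} [Fintype n]

theorem IsSymm.eq_of_forall_dotProduct_mulVec_self_eq [NoZeroDivisors R] [NeZero (2 : R)]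
    [DecidableEq n] {S T : Matrix n n R} (hS : S.IsSymm) (hT : T.IsSymm)
    (h : ∀ v, v ⬝ᵥ S *ᵥ v = v ⬝ᵥ T *ᵥ v) : S = T := by
  have hdiag (k : n) : S k k = T k k := by
    simpa [mulVec_single_one, single_one_dotProduct] using h (Pi.single k 1)
  ext i j
  have hij := h (Pi.single i 1 + Pi.single j 1)
  simp only [mulVec_add, dotProduct_add, add_dotProduct, mulVec_single_one, single_one_dotProduct,
    col_apply, hdiag, hS.apply i j, hT.apply i j] at hij
  have h2 : (2 : R) * (S i j - T i j) = 0 := by linear_combination hij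
  exact sub_eq_zero.mp ((mul_eq_zero.mp h2).resolve_left two_ne_zero)

theorem sumElim_smul_dotProduct_fromBlocks_mulVec (A B C D : Matrix n n R) (c : R) (v : n → R) :
    Sum.elim (c • v) v ⬝ᵥ fromBlocks A B C D *ᵥ Sum.elim (c • v) v
      = v ⬝ᵥ (c ^ 2 • A + c • (B + C) + D) *ᵥ v := by
  simp only [fromBlocks_mulVec, Sum.elim_comp_inl, Sum.elim_comp_inr, sumElim_dotProduct_sumElim,
    add_mulVec, smul_mulVec, mulVec_smul, dotProduct_add, dotProduct_smul, smul_dotProduct,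
    smul_eq_mul]
  ring

theorem IsSymm.forall_graph_dotProduct_mulVec_self_eq_zero_iff [NoZeroDivisors R] [NeZero (2 : R)]
    [DecidableEq n] {S : Matrix (n ⊕ n) (n ⊕ n) R} (hS : S.IsSymm) (c : R) :
    (∀ y : n ⊕ n → R, (∀ j, y (Sum.inl j) = c * y (Sum.inr j)) → y ⬝ᵥ S *ᵥ y = 0) ↔
      c ^ 2 • S.toBlocks₁₁ + c • (S.toBlocks₁₂ + S.toBlocks₂₁) + S.toBlocks₂₂ = 0 := by
  have hgraph (y : n ⊕ n → R) (hy : ∀ j, y (Sum.inl j) = c * y (Sum.inr j)) :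
      y = Sum.elim (c • (y ∘ Sum.inr)) (y ∘ Sum.inr) := by
    funext x; cases x <;> simp [hy]
  have hquad (v : n → R) : Sum.elim (c • v) v ⬝ᵥ S *ᵥ Sum.elim (c • v) v =
      v ⬝ᵥ (c ^ 2 • S.toBlocks₁₁ + c • (S.toBlocks₁₂ + S.toBlocks₂₁) + S.toBlocks₂₂) *ᵥ v := by
    rw [← sumElim_smul_dotProduct_fromBlocks_mulVec, fromBlocks_toBlocks]
  obtain ⟨hA, hBC, hCB, hD⟩ := isSymm_fromBlocks_iff.mp (S.fromBlocks_toBlocks.symm ▸ hS)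
  have hsymm : (c ^ 2 • S.toBlocks₁₁ + c • (S.toBlocks₁₂ + S.toBlocks₂₁) + S.toBlocks₂₂).IsSymm :=
    ((hA.smul _).add (IsSymm.smul (by rw [IsSymm, transpose_add, hBC, hCB, add_comm]) _)).add hD
  constructor
  · intro h
    refine hsymm.eq_of_forall_dotProduct_mulVec_self_eq isSymm_zero fun v => ?_
    rw [← hquad, h _ fun j => by simp, zero_mulVec, dotProduct_zero]
  · intro h y hy
    rw [hgraph y hy, hquad, h, zero_mulVec, dotProduct_zero]

theorem IsSymm.forall_graph_and_forall_graph_neg_iff {K : Type*} [Field K] [NeZero (2 : K)]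
    [DecidableEq n] {S : Matrix (n ⊕ n) (n ⊕ n) K} (hS : S.IsSymm) {c : K} (hc : c ^ 2 = -1) :
    ((∀ y : n ⊕ n → K, (∀ j, y (Sum.inl j) = c * y (Sum.inr j)) → y ⬝ᵥ S *ᵥ y = 0) ∧
      (∀ y : n ⊕ n → K, (∀ j, y (Sum.inl j) = -c * y (Sum.inr j)) → y ⬝ᵥ S *ᵥ y = 0)) ↔
      S.toBlocks₂₂ = S.toBlocks₁₁ ∧ S.toBlocks₂₁ = -S.toBlocks₁₂ := by
  rw [hS.forall_graph_dotProduct_mulVec_self_eq_zero_iff,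
    hS.forall_graph_dotProduct_mulVec_self_eq_zero_iff, neg_sq, hc]
  constructor
  · rintro ⟨hpos, hneg⟩
    have entry (i j) := And.intro (congrFun (congrFun hpos i) j) (congrFun (congrFun hneg i) j)
    simp only [add_apply, smul_apply, smul_eq_mul, zero_apply] at entry
    constructor <;> ext i j <;> obtain ⟨ep, em⟩ := entry i j
    all_goals refine mul_left_cancel₀ (two_ne_zero (α := K)) ?_
    · linear_combination ep + em
    · rw [neg_apply]
      linear_combination -c * (ep - em) + 2 * (S.toBlocks₁₂ i j + S.toBlocks₂₁ i j) * hc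
  · rintro ⟨hD, hC⟩
    rw [hD, hC, add_neg_cancel, smul_zero, smul_zero, add_zero, neg_one_smul, neg_add_cancel]
    exact ⟨rfl, rfl⟩

theorem rank_fromBlocks_zero₁₂_zero₂₁ {K : Type*} [Field K] {m₁ m₂ n₁ n₂ : Type*}
    [Fintype m₁] [Fintype m₂] [Fintype n₁] [Fintype n₂]
    (A : Matrix m₁ n₁ K) (D : Matrix m₂ n₂ K) :
    (fromBlocks A 0 0 D).rank = A.rank + D.rank := by
  let e₁ := LinearEquiv.sumArrowLequivProdArrow n₁ n₂ K K
  let e₂ := LinearEquiv.sumArrowLequivProdArrow m₁ m₂ K K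
  have hconj : (fromBlocks A 0 0 D).mulVecLin =
      e₂.symm.toLinearMap ∘ₗ (A.mulVecLin.prodMap D.mulVecLin) ∘ₗ e₁.toLinearMap := by
    ext x i
    rcases i with i | i <;>
      simp [e₁, e₂, fromBlocks_mulVec, LinearEquiv.sumArrowLequivProdArrow,
        Equiv.sumArrowEquivProdArrow]
  rw [rank, rank, rank, hconj, LinearMap.range_comp, LinearMap.range_comp_of_range_eq_top _
    e₁.range, LinearEquiv.finrank_map_eq, LinearMap.range_prodMap, Submodule.finrank_prod]

end Matrix

open Complex

theorem assocA8_isSymm (M : Matrix (Fin 4) (Fin 4) ℂ) : (assocA8 M).IsSymm := by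
  refine IsSymm.fromBlocks ?_ ?_ ?_ <;>
    simp only [IsSymm, transpose_smul, transpose_add, transpose_sub,
      transpose_transpose, add_comm Mᵀ, smul_sub, neg_sub]

theorem assocA8_injective : Function.Injective assocA8 := by
  have hrecover (M : Matrix (Fin 4) (Fin 4) ℂ) :
      (assocA8 M).toBlocks₁₁ + I • (assocA8 M).toBlocks₂₁ = M := by
    rw [assocA8, toBlocks_fromBlocks₁₁, toBlocks_fromBlocks₂₁, smul_smul,
      show I * (-I / 2) = 1 / 2 by linear_combination -I_mul_I / 2]
    module
  intro M₁ M₂ h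
  rw [← hrecover M₁, ← hrecover M₂, h]

theorem exists_assocA8_eq_iff {S : Matrix (Fin 4 ⊕ Fin 4) (Fin 4 ⊕ Fin 4) ℂ} (hS : S.IsSymm) :
    (∃ M, assocA8 M = S) ↔ S.toBlocks₂₂ = S.toBlocks₁₁ ∧ S.toBlocks₂₁ = -S.toBlocks₁₂ := by
  constructor
  · rintro ⟨M, rfl⟩
    simp [assocA8]
  · rintro ⟨hD, hC⟩
    obtain ⟨hA, hBC, -, -⟩ := isSymm_fromBlocks_iff.mp (S.fromBlocks_toBlocks.symm ▸ hS)
    refine ⟨S.toBlocks₁₁ - I • S.toBlocks₁₂, ?_⟩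
    conv_rhs => rw [← S.fromBlocks_toBlocks, hD, hC]
    have hMt : (S.toBlocks₁₁ - I • S.toBlocks₁₂)ᵀ = S.toBlocks₁₁ + I • S.toBlocks₁₂ := by
      rw [transpose_sub, transpose_smul, hA.eq, hBC, hC, smul_neg, sub_neg_eq_add]
    rw [assocA8, hMt]
    congr 1
    · module
    · linear_combination (norm := module) -(I_mul_I • S.toBlocks₁₂)
    · linear_combination (norm := module) I_mul_I • S.toBlocks₁₂
    · module

noncomputable def isotropicCoords (n : Type*) [DecidableEq n] : Matrix (n ⊕ n) (n ⊕ n) ℂ :=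
  fromBlocks 1 (I • 1) 1 (-I • 1)

theorem isUnit_det_isotropicCoords (n : Type*) [Fintype n] [DecidableEq n] :
    IsUnit (isotropicCoords n).det := by
  rw [isotropicCoords, det_fromBlocks_one₁₁, Matrix.one_mul, ← sub_smul, det_smul, det_one,
    mul_one]
  exact (isUnit_iff_ne_zero.mpr (by norm_num [Complex.ext_iff])).pow _

theorem isotropicCoords_mul_assocA8 (M : Matrix (Fin 4) (Fin 4) ℂ) :
    isotropicCoords (Fin 4) * assocA8 M = fromBlocks M 0 0 Mᵀ * isotropicCoords (Fin 4) := by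
  rw [isotropicCoords, assocA8, fromBlocks_multiply, fromBlocks_multiply]
  congr 1 <;> simp only [Matrix.one_mul, Matrix.mul_one, Matrix.smul_mul, Matrix.mul_smul,
    zero_add, add_zero, smul_zero]
  · linear_combination (norm := module) (-1 / 2 : ℂ) • I_mul_I • (M - Mᵀ)
  · module
  · linear_combination (norm := module) (1 / 2 : ℂ) • I_mul_I • (M - Mᵀ)
  · module

theorem rank_assocA8 (M : Matrix (Fin 4) (Fin 4) ℂ) : (assocA8 M).rank = 2 * M.rank := by
  have hP := isUnit_det_isotropicCoords (Fin 4)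
  rw [← rank_mul_eq_right_of_isUnit_det _ _ hP, isotropicCoords_mul_assocA8,
    rank_mul_eq_left_of_isUnit_det _ _ hP, rank_fromBlocks_zero₁₂_zero₂₁, rank_transpose, two_mul]

/-- The map `M ↦ (y ↦ y·A₈(M)·yᵀ)` from 4×4 complex matrices to quadratic forms on
`ℂ⁸` is injective; its image is exactly the quadratic forms (symmetric matrices)
vanishing identically on the two 3-spaces `V(y₀+iy₄, …, y₃+iy₇)` and
`V(y₀-iy₄, …, y₃-iy₇)`; and `rank A₈(M) = 2·rank M`. Consequently the rank-`k`
locus of `P(M₄(ℂ))` is isomorphic to the space of rank-`2k` quadrics in `ℂP⁷`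
through two given disjoint 3-spaces. -/
theorem assocA8_injective_image_rank :
    Function.Injective (fun (M : Matrix (Fin 4) (Fin 4) ℂ) =>
      fun y : Fin 4 ⊕ Fin 4 → ℂ => y ⬝ᵥ (assocA8 M).mulVec y) ∧
    (∀ S : Matrix (Fin 4 ⊕ Fin 4) (Fin 4 ⊕ Fin 4) ℂ, S.IsSymm →
      ((∃ M : Matrix (Fin 4) (Fin 4) ℂ, assocA8 M = S) ↔
        ((∀ y : Fin 4 ⊕ Fin 4 → ℂ,
            (∀ j : Fin 4, y (Sum.inl j) + Complex.I * y (Sum.inr j) = 0) →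
            y ⬝ᵥ S.mulVec y = 0) ∧
         (∀ y : Fin 4 ⊕ Fin 4 → ℂ,
            (∀ j : Fin 4, y (Sum.inl j) - Complex.I * y (Sum.inr j) = 0) →
            y ⬝ᵥ S.mulVec y = 0)))) ∧
    (∀ M : Matrix (Fin 4) (Fin 4) ℂ, (assocA8 M).rank = 2 * M.rank) := by
  refine ⟨fun M₁ M₂ h => assocA8_injective ?_, fun S hS => ?_, rank_assocA8⟩
  · exact (assocA8_isSymm M₁).eq_of_forall_dotProduct_mulVec_self_eq (assocA8_isSymm M₂)
      (congrFun h)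
  · simp only [add_eq_zero_iff_eq_neg, sub_eq_zero, ← neg_mul]
    rw [exists_assocA8_eq_iff hS, ← hS.forall_graph_and_forall_graph_neg_iff I_sq, and_comm]
end
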